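/- Let (Ω,𝒜,μ) be a σ-finite measure space, let T be a Dunford–Schwartz operator on (Ω,μ), and let 1 ≤ p < ∞. Then the set C_p = { f ∈ L^p(Ω) : the sequence (M_n(T)(f)) converges almost uniformly } is closed in L^p(Ω) with respect to the norm ‖·‖_p. -/

import Mathlib

/-!
By the Banach principle, closedness follows from a maximal inequality
`μ {sup_n |M_n h| > 2c} ≤ (‖h‖_p / c)^p`: if `f_j → f` in `L^p`, then off a set of small
measure the averages of `f` stay uniformly close to those of some `f_j`, which converge
uniformly off a small set, so the averages of `f` are uniformly Cauchy off small sets.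

For the maximal inequality, split `h` at height `c`. The bounded part has averages bounded by
`c` since `T` contracts `L^∞`. The averages of the integrable part `b` are dominated by those of
`|T|` applied to `|b|`, where `|T|` is the Chacon–Krengel linear modulus of `T`, a positive
Dunford–Schwartz operator; for positive operators the weak `(1,1)` maximal inequality follows
from Hopf's maximal ergodic lemma.
-/

open MeasureTheory Filter Set
open scoped ENNReal Topology

variable {Ω : Type*} [MeasurableSpace Ω]

/-- Membership in `L¹(μ) + L^∞(μ)`: `f = g + h` with `g ∈ L¹`, `h ∈ L^∞`. -/
def MemL1PlusLinf (μ : Measure Ω) (f : Ω → ℝ) : Prop :=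
  ∃ g h : Ω → ℝ, MemLp g 1 μ ∧ MemLp h ⊤ μ ∧ f = g + h

/-- Membership in `R_μ = {f ∈ L¹+L^∞ : μ{|f| > λ} < ∞ for all λ > 0}`. -/
def MemRmu (μ : Measure Ω) (f : Ω → ℝ) : Prop :=
  MemL1PlusLinf μ f ∧ ∀ l : ℝ, 0 < l → μ {x | l < |f x|} < ⊤

/-- Membership in `L⁰_μ = {f : μ{|f| > λ} < ∞ for some λ > 0}`. -/
def MemL0mu (μ : Measure Ω) (f : Ω → ℝ) : Prop :=
  ∃ l : ℝ, 0 < l ∧ μ {x | l < |f x|} < ⊤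

/-- Almost uniform convergence of a sequence of functions. -/
def TendstoAU (μ : Measure Ω) (F : ℕ → Ω → ℝ) (f : Ω → ℝ) : Prop :=
  ∀ ε : ℝ, 0 < ε → ∃ E : Set Ω, MeasurableSet E ∧ μ Eᶜ ≤ ENNReal.ofReal ε ∧
    Tendsto (fun n => eLpNorm (E.indicator (f - F n)) ⊤ μ) atTop (𝓝 0)

/-- Dunford-Schwartz operator (at the level of measurable representatives):
a linear, measurability-preserving operator which is a contraction in both the
`L¹`- and the `L^∞`-norm. -/
def IsDS (μ : Measure Ω) (T : (Ω → ℝ) → Ω → ℝ) : Prop :=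
  (∀ f g : Ω → ℝ, T (f + g) = T f + T g) ∧
  (∀ (c : ℝ) (f : Ω → ℝ), T (c • f) = c • T f) ∧
  (∀ f : Ω → ℝ, Measurable f → Measurable (T f)) ∧
  (∀ f : Ω → ℝ, MemLp f 1 μ → eLpNorm (T f) 1 μ ≤ eLpNorm f 1 μ) ∧
  (∀ f : Ω → ℝ, MemLp f ⊤ μ → eLpNorm (T f) ⊤ μ ≤ eLpNorm f ⊤ μ)

/-- Cesàro averages `M_n(T)(f) = (1/n) ∑_{k=0}^{n-1} T^k f`. -/
noncomputable def cesaro (T : (Ω → ℝ) → Ω → ℝ) (n : ℕ) (f : Ω → ℝ) : Ω → ℝ :=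
  fun x => (∑ k ∈ Finset.range n, T^[k] f x) / n

namespace IsDS

variable {μ : Measure Ω} {T : (Ω → ℝ) → Ω → ℝ}

def toLinearMap (hT : IsDS μ T) : (Ω → ℝ) →ₗ[ℝ] Ω → ℝ where
  toFun := T
  map_add' := hT.1
  map_smul' := hT.2.1

variable (hT : IsDS μ T)
include hT

theorem measurable {f : Ω → ℝ} (hf : Measurable f) : Measurable (T f) := hT.2.2.1 f hf

theorem map_smul (c : ℝ) (f : Ω → ℝ) : T (c • f) = c • T f := hT.2.1 c f

theorem iterate_eq_pow (k : ℕ) : T^[k] = ⇑(hT.toLinearMap ^ k) := by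
  ext f : 1
  rw [Module.End.pow_apply]
  rfl

theorem iterate_add (k : ℕ) (f g : Ω → ℝ) : T^[k] (f + g) = T^[k] f + T^[k] g := by
  rw [iterate_eq_pow hT, map_add]

theorem map_sub (f g : Ω → ℝ) : T (f - g) = T f - T g :=
  _root_.map_sub hT.toLinearMap f g

theorem iterate_sub (k : ℕ) (f g : Ω → ℝ) : T^[k] (f - g) = T^[k] f - T^[k] g := by
  rw [iterate_eq_pow hT, _root_.map_sub]

theorem cesaro_sub (n : ℕ) (f g : Ω → ℝ) : cesaro T n (f - g) = cesaro T n f - cesaro T n g := by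
  ext x
  simp [cesaro, hT.iterate_sub, Finset.sum_sub_distrib, sub_div]

theorem measurable_iterate {f : Ω → ℝ} (hf : Measurable f) (k : ℕ) : Measurable (T^[k] f) := by
  induction k with
  | zero => exact hf
  | succ k ih => rw [Function.iterate_succ_apply']; exact hT.measurable ih

theorem lintegral_enorm_le {f : Ω → ℝ} (hf : Integrable f μ) :
    ∫⁻ x, ‖T f x‖ₑ ∂μ ≤ ∫⁻ x, ‖f x‖ₑ ∂μ := by
  simpa only [eLpNorm_one_eq_lintegral_enorm] using hT.2.2.2.1 f (memLp_one_iff_integrable.2 hf)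

theorem congr_ae {f g : Ω → ℝ} (hf : Measurable f) (hg : Measurable g) (hfg : f =ᵐ[μ] g) :
    T f =ᵐ[μ] T g := by
  have hnull : ∫⁻ x, ‖(f - g) x‖ₑ ∂μ = 0 :=
    lintegral_eq_zero_of_ae_eq_zero (by filter_upwards [hfg] with x hx; simp [hx])
  have hint : Integrable (f - g) μ :=
    ⟨(hf.sub hg).aestronglyMeasurable, by
      show ∫⁻ x, ‖(f - g) x‖ₑ ∂μ < ∞
      rw [hnull]; exact ENNReal.zero_lt_top⟩
  have hT0 : ∫⁻ x, ‖T (f - g) x‖ₑ ∂μ = 0 :=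
    le_antisymm ((hT.lintegral_enorm_le hint).trans hnull.le) bot_le
  rw [lintegral_eq_zero_iff' (hT.measurable (hf.sub hg)).enorm.aemeasurable] at hT0
  filter_upwards [hT0] with x hx
  rw [hT.map_sub] at hx
  simpa [sub_eq_zero] using hx

theorem ae_abs_le {f : Ω → ℝ} (hf : Measurable f) {c : ℝ} (hc : 0 ≤ c)
    (hfc : ∀ᵐ x ∂μ, |f x| ≤ c) : ∀ᵐ x ∂μ, |T f x| ≤ c := by
  have hbound : eLpNorm f ⊤ μ ≤ ENNReal.ofReal c := by
    rw [eLpNorm_exponent_top]; exact eLpNormEssSup_le_of_ae_bound hfc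
  have hTf := (hT.2.2.2.2 f ⟨hf.aestronglyMeasurable, hbound.trans_lt ENNReal.ofReal_lt_top⟩).trans
    hbound
  rw [eLpNorm_exponent_top] at hTf
  filter_upwards [ae_le_eLpNormEssSup (f := T f) (μ := μ)] with x hx
  rw [← ENNReal.ofReal_le_ofReal_iff hc, ← Real.enorm_eq_ofReal_abs]
  exact hx.trans hTf

theorem ae_abs_iterate_le {f : Ω → ℝ} (hf : Measurable f) {c : ℝ} (hc : 0 ≤ c)
    (hfc : ∀ᵐ x ∂μ, |f x| ≤ c) (k : ℕ) : ∀ᵐ x ∂μ, |T^[k] f x| ≤ c := by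
  induction k with
  | zero => exact hfc
  | succ k ih =>
    rw [Function.iterate_succ_apply']
    exact hT.ae_abs_le (hT.measurable_iterate hf k) hc ih

theorem map_sum {ι : Type*} (s : Finset ι) (v : ι → Ω → ℝ) :
    T (fun x => ∑ i ∈ s, v i x) = fun x => ∑ i ∈ s, T (v i) x := by
  have h := _root_.map_sum hT.toLinearMap v s
  simp only [Finset.sum_fn] at h
  exact h

theorem ae_abs_le_sum_abs {ι : Type*} [Fintype ι] {v : Ω → ℝ} {r : ι → Ω → ℝ}
    (hv : Measurable v) (hr : ∀ i, Measurable (r i)) (h : v =ᵐ[μ] fun x => ∑ i, r i x) :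
    ∀ᵐ x ∂μ, |T v x| ≤ ∑ i, |T (r i) x| := by
  filter_upwards [hT.congr_ae hv (Finset.measurable_sum _ fun i _ => hr i) h] with x hx
  rw [hx, hT.map_sum]
  exact Finset.abs_sum_le_sum_abs _ _

end IsDS

structure IsPositiveDS (μ : Measure Ω) (P : (Ω → ℝ) → Ω → ℝ) : Prop where
  measurable {f} : Measurable f → Measurable (P f)
  integrable {f} : Measurable f → Integrable f μ → Integrable (P f) μ
  map_add {f g} : Measurable f → Integrable f μ → Measurable g → Integrable g μ →
    P (f + g) =ᵐ[μ] P f + P g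
  nonneg {f} : Measurable f → Integrable f μ → 0 ≤ᵐ[μ] f → 0 ≤ᵐ[μ] P f
  integral_le {f} : Measurable f → Integrable f μ → 0 ≤ᵐ[μ] f → ∫ x, P f x ∂μ ≤ ∫ x, f x ∂μ
  le_const {f} {c : ℝ} : Measurable f → Integrable f μ → 0 ≤ᵐ[μ] f → 0 ≤ c →
    (∀ᵐ x ∂μ, f x ≤ c) → ∀ᵐ x ∂μ, P f x ≤ c

namespace IsPositiveDS

variable {μ : Measure Ω} {P : (Ω → ℝ) → Ω → ℝ} (hP : IsPositiveDS μ P) {f g w b : Ω → ℝ}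
include hP

theorem map_sub (hf : Measurable f) (hfi : Integrable f μ) (hg : Measurable g)
    (hgi : Integrable g μ) : P (f - g) =ᵐ[μ] P f - P g := by
  filter_upwards [hP.map_add (hf.sub hg) (hfi.sub hgi) hg hgi] with x hx
  rw [sub_add_cancel] at hx
  simp [hx]

theorem mono (hf : Measurable f) (hfi : Integrable f μ) (hg : Measurable g)
    (hgi : Integrable g μ) (hfg : f ≤ᵐ[μ] g) : P f ≤ᵐ[μ] P g := by
  filter_upwards [hP.map_sub hg hgi hf hfi, hP.nonneg (hg.sub hf) (hgi.sub hfi)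
    (hfg.mono fun x hx => sub_nonneg.2 hx)] with x h1 h2
  simpa [h1] using h2

theorem congr_ae (hf : Measurable f) (hfi : Integrable f μ) (hg : Measurable g)
    (hgi : Integrable g μ) (hfg : f =ᵐ[μ] g) : P f =ᵐ[μ] P g :=
  (hP.mono hf hfi hg hgi hfg.le).antisymm (hP.mono hg hgi hf hfi hfg.symm.le)

theorem measurable_iterate (hf : Measurable f) (k : ℕ) : Measurable (P^[k] f) := by
  induction k with
  | zero => exact hf
  | succ k ih => rw [Function.iterate_succ_apply']; exact hP.measurable ih

theorem integrable_iterate (hf : Measurable f) (hfi : Integrable f μ) (k : ℕ) :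
    Integrable (P^[k] f) μ := by
  induction k with
  | zero => exact hfi
  | succ k ih =>
    rw [Function.iterate_succ_apply']; exact hP.integrable (hP.measurable_iterate hf k) ih

theorem iterate_sub (hf : Measurable f) (hfi : Integrable f μ) (hg : Measurable g)
    (hgi : Integrable g μ) (k : ℕ) : P^[k] (f - g) =ᵐ[μ] P^[k] f - P^[k] g := by
  induction k with
  | zero => rfl
  | succ k ih =>
    simp only [Function.iterate_succ_apply']
    have hfk := hP.measurable_iterate hf k
    have hgk := hP.measurable_iterate hg k
    have hfik := hP.integrable_iterate hf hfi k
    have hgik := hP.integrable_iterate hg hgi k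
    exact (hP.congr_ae (hP.measurable_iterate (hf.sub hg) k)
      (hP.integrable_iterate (hf.sub hg) (hfi.sub hgi) k) (hfk.sub hgk) (hfik.sub hgik) ih).trans
      (hP.map_sub hfk hfik hgk hgik)

theorem iterate_nonneg (hf : Measurable f) (hfi : Integrable f μ) (hf0 : 0 ≤ᵐ[μ] f) (k : ℕ) :
    0 ≤ᵐ[μ] P^[k] f := by
  induction k with
  | zero => exact hf0
  | succ k ih =>
    rw [Function.iterate_succ_apply']
    exact hP.nonneg (hP.measurable_iterate hf k) (hP.integrable_iterate hf hfi k) ih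

theorem iterate_le_const (hf : Measurable f) (hfi : Integrable f μ) (hf0 : 0 ≤ᵐ[μ] f) {c : ℝ}
    (hc : 0 ≤ c) (hfc : ∀ᵐ x ∂μ, f x ≤ c) (k : ℕ) : ∀ᵐ x ∂μ, P^[k] f x ≤ c := by
  induction k with
  | zero => exact hfc
  | succ k ih =>
    rw [Function.iterate_succ_apply']
    exact hP.le_const (hP.measurable_iterate hf k) (hP.integrable_iterate hf hfi k)
      (hP.iterate_nonneg hf hfi hf0 k) hc ih

theorem map_sum (v : ℕ → Ω → ℝ) (hv : ∀ k, Measurable (v k)) (hvi : ∀ k, Integrable (v k) μ)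
    (n : ℕ) : P (fun x => ∑ k ∈ Finset.range n, v k x) =ᵐ[μ]
      fun x => ∑ k ∈ Finset.range n, P (v k) x := by
  induction n with
  | zero =>
    filter_upwards [hP.map_add (f := 0) (g := 0) measurable_const (integrable_zero _ _ _)
      measurable_const (integrable_zero _ _ _)] with x hx
    simp only [Finset.sum_range_zero]
    exact (by simpa using hx : P 0 x = 0)
  | succ n ih =>
    have hsplit : (fun x => ∑ k ∈ Finset.range (n + 1), v k x) =
        (fun x => ∑ k ∈ Finset.range n, v k x) + v n := by
      ext x; simp [Finset.sum_range_succ]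
    rw [hsplit]
    filter_upwards [hP.map_add (Finset.measurable_sum (Finset.range n) fun k _ => hv k)
      (integrable_finsetSum (Finset.range n) fun k _ => hvi k) (hv n) (hvi n), ih] with x h1 h2
    rw [h1, Pi.add_apply, h2, Finset.sum_range_succ]

theorem sum_iterate_succ (hw : Measurable w) (hwi : Integrable w μ) (n : ℕ) :
    (fun x => ∑ k ∈ Finset.range (n + 1), P^[k] w x) =ᵐ[μ]
      fun x => w x + P (fun x => ∑ k ∈ Finset.range n, P^[k] w x) x := by
  filter_upwards [hP.map_sum _ (hP.measurable_iterate hw) (hP.integrable_iterate hw hwi) n]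
    with x hx
  simp only [hx, Finset.sum_range_succ', Function.iterate_succ_apply', add_comm]
  rfl

/-- Garsia's integration step in the proof of Hopf's maximal ergodic lemma. -/
theorem setIntegral_nonneg_of_le_add {M : Ω → ℝ} (hM : Measurable M) (hMi : Integrable M μ)
    (hM0 : ∀ x, 0 ≤ M x) (hwi : Integrable w μ)
    (hMw : ∀ᵐ x ∂μ, 0 < M x → M x ≤ w x + P M x) : 0 ≤ ∫ x in {x | 0 < M x}, w x ∂μ := by
  have hPMi := hP.integrable hM hMi
  have hMint : ∫ x in {x | 0 < M x}, M x ∂μ = ∫ x, M x ∂μ :=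
    setIntegral_eq_integral_of_forall_compl_eq_zero fun x hx =>
      le_antisymm (not_lt.1 hx) (hM0 x)
  calc (0 : ℝ) ≤ ∫ x, M x ∂μ - ∫ x, P M x ∂μ :=
        sub_nonneg.2 (hP.integral_le hM hMi (ae_of_all _ hM0))
    _ ≤ ∫ x in {x | 0 < M x}, M x ∂μ - ∫ x in {x | 0 < M x}, P M x ∂μ :=
      hMint ▸ sub_le_sub_left
        (setIntegral_le_integral hPMi (hP.nonneg hM hMi (ae_of_all _ hM0))) _
    _ = ∫ x in {x | 0 < M x}, (M x - P M x) ∂μ :=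
      (integral_sub hMi.integrableOn hPMi.integrableOn).symm
    _ ≤ ∫ x in {x | 0 < M x}, w x ∂μ := by
      refine integral_mono_ae (hMi.sub hPMi).integrableOn hwi.integrableOn ?_
      rw [EventuallyLE, ae_restrict_iff' (measurableSet_lt measurable_const hM)]
      filter_upwards [hMw] with x hx hxM
      linarith [hx hxM]

/-- Hopf's maximal ergodic lemma. -/
theorem setIntegral_maximal_nonneg (hw : Measurable w) (hwi : Integrable w μ) (N : ℕ) :
    0 ≤ ∫ x in {x | ∃ n ≤ N, 0 < ∑ k ∈ Finset.range n, P^[k] w x}, w x ∂μ := by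
  set S : ℕ → Ω → ℝ := fun n x => ∑ k ∈ Finset.range n, P^[k] w x
  have hS : ∀ n, Measurable (S n) := fun n =>
    Finset.measurable_sum _ fun k _ => hP.measurable_iterate hw k
  have hSi : ∀ n, Integrable (S n) μ := fun n =>
    integrable_finsetSum _ fun k _ => hP.integrable_iterate hw hwi k
  have hne : (Finset.range (N + 1)).Nonempty := Finset.nonempty_range_add_one
  set M : Ω → ℝ := (Finset.range (N + 1)).sup' hne S
  have hM_apply : ∀ x, M x = (Finset.range (N + 1)).sup' hne fun n => S n x :=
    Finset.sup'_apply hne S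
  have hM : Measurable M := Finset.measurable_sup' hne fun n _ => hS n
  have hSM : ∀ n ≤ N, ∀ x, S n x ≤ M x := fun n hn x =>
    (hM_apply x).symm ▸ Finset.le_sup' (fun n => S n x) (Finset.mem_range.2 (by omega))
  have hMi : Integrable M μ := by
    refine (integrable_finsetSum (Finset.range (N + 1)) fun n _ => (hSi n).abs).mono'
      hM.aestronglyMeasurable (ae_of_all _ fun x => ?_)
    obtain ⟨n, hn, hMn⟩ := Finset.exists_mem_eq_sup' hne fun n => S n x
    rw [Real.norm_eq_abs, hM_apply, hMn]
    exact Finset.single_le_sum (f := fun n => |S n x|) (fun _ _ => abs_nonneg _) hn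
  have hE : {x | ∃ n ≤ N, 0 < S n x} = {x | 0 < M x} := by
    ext x
    simp [hM_apply, Finset.lt_sup'_iff]
  rw [hE]
  refine hP.setIntegral_nonneg_of_le_add hM hMi (fun x => by simpa [S] using hSM 0 N.zero_le x)
    hwi ?_
  -- Where `M > 0`, it is attained at some `S (n + 1) = w + P (S n) ≤ w + P M`.
  have hmono : ∀ n, ∀ᵐ x ∂μ, n ≤ N → P (S n) x ≤ P M x := fun n => by
    by_cases hn : n ≤ N
    · filter_upwards [hP.mono (hS n) (hSi n) hM hMi (ae_of_all _ (hSM n hn))] with x hx _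
      exact hx
    · exact ae_of_all _ fun x h => absurd h hn
  filter_upwards [ae_all_iff.2 (hP.sum_iterate_succ hw hwi), ae_all_iff.2 hmono]
    with x hstep hmono hx
  obtain ⟨n, hn, hMn⟩ := Finset.exists_mem_eq_sup' hne fun n => S n x
  rw [← hM_apply] at hMn
  rcases n with _ | n
  · exact absurd (hMn ▸ hx : 0 < S 0 x) (by simp [S])
  · rw [hMn]
    have := hmono n (by simp at hn; omega)
    have := hstep n
    simp only [S] at this ⊢
    linarith

theorem measure_inter_maximal_le (hb : Measurable b) (hbi : Integrable b μ) (hb0 : 0 ≤ᵐ[μ] b)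
    {c : ℝ} (hc : 0 < c) (N : ℕ) {F : Set Ω} (hF : MeasurableSet F) (hFμ : μ F ≠ ∞) :
    μ (F ∩ {x | ∃ n ≤ N, n * c < ∑ k ∈ Finset.range n, P^[k] b x}) ≤
      ENNReal.ofReal ((∫ x, b x ∂μ) / c) := by
  set ind : Ω → ℝ := F.indicator fun _ => c
  have hind : Measurable ind := measurable_const.indicator hF
  have hindi : Integrable ind μ := (integrable_indicator_iff hF).2 (integrableOn_const hFμ)
  have hind0 : ∀ x, 0 ≤ ind x := fun x => Set.indicator_nonneg (fun _ _ => hc.le) x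
  have hindc : ∀ x, ind x ≤ c := fun x => Set.indicator_le_self' (fun _ _ => hc.le) x
  have hopf := hP.setIntegral_maximal_nonneg (hb.sub hind) (hbi.sub hindi) N
  set E := {x | ∃ n ≤ N, 0 < ∑ k ∈ Finset.range n, P^[k] (b - ind) x}
  have hcE : c * μ.real (E ∩ F) ≤ ∫ x, b x ∂μ := by
    simp only [Pi.sub_apply] at hopf
    rw [integral_sub hbi.integrableOn hindi.integrableOn, setIntegral_indicator hF,
      setIntegral_const, smul_eq_mul] at hopf
    linarith [setIntegral_le_integral (s := E) hbi hb0]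
  -- Subtracting the iterates of `c 𝟙_F ≤ c` costs at most `n c` in the `n`-th partial sum.
  have hsub : (F ∩ {x | ∃ n ≤ N, n * c < ∑ k ∈ Finset.range n, P^[k] b x} : Set Ω) ≤ᵐ[μ]
      (E ∩ F : Set Ω) := by
    filter_upwards [ae_all_iff.2 (hP.iterate_sub hb hbi hind hindi),
      ae_all_iff.2 (hP.iterate_le_const hind hindi (ae_of_all _ hind0) hc.le
        (ae_of_all _ hindc))] with x hsub hle ⟨hxF, n, hn, hx⟩
    refine ⟨⟨n, hn, ?_⟩, hxF⟩
    have : ∑ k ∈ Finset.range n, P^[k] ind x ≤ n * c := by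
      simpa using Finset.sum_le_sum fun k (_ : k ∈ Finset.range n) => hle k
    simp only [hsub, Pi.sub_apply, Finset.sum_sub_distrib]
    linarith
  calc _ ≤ μ (E ∩ F) := measure_mono_ae hsub
    _ = ENNReal.ofReal (μ.real (E ∩ F)) :=
      (ENNReal.ofReal_toReal (measure_ne_top_of_subset Set.inter_subset_right hFμ)).symm
    _ ≤ ENNReal.ofReal ((∫ x, b x ∂μ) / c) :=
      ENNReal.ofReal_le_ofReal ((le_div_iff₀ hc).2 (by linarith))

theorem measure_maximal_le [SigmaFinite μ] (hb : Measurable b) (hbi : Integrable b μ)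
    (hb0 : 0 ≤ᵐ[μ] b) {c : ℝ} (hc : 0 < c) :
    μ {x | ∃ n : ℕ, n * c < ∑ k ∈ Finset.range n, P^[k] b x} ≤
      ENNReal.ofReal ((∫ x, b x ∂μ) / c) := by
  set A : ℕ → Set Ω := fun N => {x | ∃ n ≤ N, n * c < ∑ k ∈ Finset.range n, P^[k] b x}
  have hA : Monotone A := fun N N' hN x ⟨n, hn, hx⟩ => ⟨n, hn.trans hN, hx⟩
  have hU : {x | ∃ n : ℕ, n * c < ∑ k ∈ Finset.range n, P^[k] b x} = ⋃ N, A N := by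
    ext x
    simp only [A, Set.mem_iUnion]
    exact ⟨fun ⟨n, hx⟩ => ⟨n, n, le_rfl, hx⟩, fun ⟨_, n, _, hx⟩ => ⟨n, hx⟩⟩
  rw [hU, hA.measure_iUnion]
  refine iSup_le fun N => ?_
  rw [← Measure.iSup_restrict_spanningSets]
  refine iSup_le fun i => ?_
  rw [Measure.restrict_apply' (measurableSet_spanningSets μ i), Set.inter_comm]
  exact hP.measure_inter_maximal_le hb hbi hb0 hc N (measurableSet_spanningSets μ i)
    (measure_spanningSets_lt_top μ i).ne

end IsPositiveDS

section EssSup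

variable {μ : Measure Ω}

def IsAELUB (μ : Measure Ω) (S : Set (Ω → ℝ)) (t : Ω → ℝ) : Prop :=
  (∀ f ∈ S, f ≤ᵐ[μ] t) ∧ ∀ z : Ω → ℝ, (∀ f ∈ S, f ≤ᵐ[μ] z) → t ≤ᵐ[μ] z

theorem exists_ae_monotone_of_directed {S : Set (Ω → ℝ)}
    (hdir : ∀ f ∈ S, ∀ g ∈ S, ∃ h ∈ S, f ≤ᵐ[μ] h ∧ g ≤ᵐ[μ] h)
    {a : ℕ → Ω → ℝ} (ha : ∀ k, a k ∈ S) :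
    ∃ b : ℕ → Ω → ℝ, (∀ k, b k ∈ S) ∧ (∀ k, a k ≤ᵐ[μ] b k) ∧
      ∀ᵐ x ∂μ, Monotone fun k => b k x := by
  choose! ub hub using hdir
  let b : ℕ → Ω → ℝ := fun k => Nat.rec (a 0) (fun k prev => ub prev (a (k + 1))) k
  have hb : ∀ k, b k ∈ S := fun k => by
    induction k with
    | zero => exact ha 0
    | succ k ih => exact (hub _ ih _ (ha (k + 1))).1
  have hstep : ∀ k, b k ≤ᵐ[μ] b (k + 1) := fun k => (hub _ (hb k) _ (ha (k + 1))).2.1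
  refine ⟨b, hb, fun k => ?_, ?_⟩
  · cases k with
    | zero => exact EventuallyLE.refl _ _
    | succ k => exact (hub _ (hb k) _ (ha (k + 1))).2.2
  · filter_upwards [ae_all_iff.2 hstep] with x hx
    exact monotone_nat_of_le_succ hx

theorem exists_lintegral_iSup_eq_sSup {S : Set (Ω → ℝ)} (hne : S.Nonempty)
    (hmeas : ∀ f ∈ S, Measurable f) (hdir : ∀ f ∈ S, ∀ g ∈ S, ∃ h ∈ S, f ≤ᵐ[μ] h ∧ g ≤ᵐ[μ] h) :
    ∃ b : ℕ → Ω → ℝ, (∀ k, b k ∈ S) ∧ (∀ᵐ x ∂μ, Monotone fun k => b k x) ∧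
      ∫⁻ x, ⨆ k, ENNReal.ofReal (b k x) ∂μ =
        sSup ((fun f => ∫⁻ x, ENNReal.ofReal (f x) ∂μ) '' S) := by
  obtain ⟨i, -, hi_lim, hi_mem⟩ := exists_seq_tendsto_sSup
    (hne.image fun f => ∫⁻ x, ENNReal.ofReal (f x) ∂μ) (OrderTop.bddAbove _)
  choose a ha hai using hi_mem
  obtain ⟨b, hb, hab, hb_mono⟩ := exists_ae_monotone_of_directed hdir ha
  refine ⟨b, hb, hb_mono, ?_⟩
  rw [lintegral_iSup' (fun k => (hmeas _ (hb k)).ennreal_ofReal.aemeasurable)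
    (hb_mono.mono fun x hx => fun k l hkl => ENNReal.ofReal_le_ofReal (hx hkl))]
  refine le_antisymm (iSup_le fun k => le_sSup ⟨b k, hb k, rfl⟩) ?_
  refine le_of_tendsto' hi_lim fun k => (hai k).symm.le.trans ?_
  exact (lintegral_mono_ae ((hab k).mono fun x hx => ENNReal.ofReal_le_ofReal hx)).trans
    (le_iSup (fun k => ∫⁻ x, ENNReal.ofReal (b k x) ∂μ) k)

theorem exists_isAELUB_of_directed {S : Set (Ω → ℝ)} (hne : S.Nonempty)
    (hmeas : ∀ f ∈ S, Measurable f) (hnn : ∀ f ∈ S, 0 ≤ᵐ[μ] f)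
    (hdir : ∀ f ∈ S, ∀ g ∈ S, ∃ h ∈ S, f ≤ᵐ[μ] h ∧ g ≤ᵐ[μ] h)
    {C : ℝ≥0∞} (hC : C ≠ ∞) (hbdd : ∀ f ∈ S, ∫⁻ x, ENNReal.ofReal (f x) ∂μ ≤ C) :
    ∃ t, Measurable t ∧ IsAELUB μ S t ∧ ∫⁻ x, ENNReal.ofReal (t x) ∂μ ≤ C := by
  obtain ⟨b, hb, hb_mono, hG_int⟩ := exists_lintegral_iSup_eq_sSup (μ := μ) hne hmeas hdir
  have hb_meas : ∀ k, Measurable fun x => ENNReal.ofReal (b k x) :=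
    fun k => (hmeas _ (hb k)).ennreal_ofReal
  set G : Ω → ℝ≥0∞ := fun x => ⨆ k, ENNReal.ofReal (b k x)
  have hG_meas : Measurable G := Measurable.iSup hb_meas
  have hG_le : ∫⁻ x, G x ∂μ ≤ C := hG_int ▸ sSup_le (by rintro _ ⟨f, hf, rfl⟩; exact hbdd f hf)
  have hG_ne_top : ∫⁻ x, G x ∂μ ≠ ∞ := ne_top_of_le_ne_top hC hG_le
  have hG_lt_top : ∀ᵐ x ∂μ, G x < ∞ := ae_lt_top hG_meas hG_ne_top
  -- Each `b k ⊔ f` is dominated by a member of `S`, so `G ⊔ f` has integral at most that of `G`.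
  have hle_G : ∀ f ∈ S, ∀ᵐ x ∂μ, ENNReal.ofReal (f x) ≤ G x := by
    intro f hf
    have hsup : ∫⁻ x, G x ⊔ ENNReal.ofReal (f x) ∂μ ≤ ∫⁻ x, G x ∂μ := by
      rw [hG_int]
      simp only [G, iSup_sup]
      rw [lintegral_iSup' (f := fun k x => ENNReal.ofReal (b k x) ⊔ ENNReal.ofReal (f x))
        (fun k => ((hb_meas k).sup (hmeas f hf).ennreal_ofReal).aemeasurable)
        (hb_mono.mono fun x hx => fun k l hkl => sup_le_sup_right
          (ENNReal.ofReal_le_ofReal (hx hkl)) _)]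
      refine iSup_le fun k => ?_
      obtain ⟨h, hh, hbh, hfh⟩ := hdir _ (hb k) f hf
      refine (lintegral_mono_ae ?_).trans (le_sSup ⟨h, hh, rfl⟩)
      filter_upwards [hbh, hfh] with x h1 h2
      exact sup_le (ENNReal.ofReal_le_ofReal h1) (ENNReal.ofReal_le_ofReal h2)
    filter_upwards [ae_eq_of_ae_le_of_lintegral_le (ae_of_all _ fun x => le_sup_left)
      hG_ne_top (hG_meas.sup (hmeas f hf).ennreal_ofReal).aemeasurable hsup] with x hx
    exact hx ▸ le_sup_right
  refine ⟨fun x => (G x).toReal, hG_meas.ennreal_toReal, ⟨fun f hf => ?_, fun z hz => ?_⟩, ?_⟩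
  · filter_upwards [hle_G f hf, hG_lt_top] with x hx hxt
    exact ((le_max_left _ 0).trans_eq ENNReal.toReal_ofReal'.symm).trans
      (ENNReal.toReal_mono hxt.ne hx)
  · filter_upwards [ae_all_iff.2 fun k => hz _ (hb k), hnn _ (hb 0)] with x hx hx0
    exact ENNReal.toReal_le_of_le_ofReal ((hx0 : 0 ≤ b 0 x).trans (hx 0))
      (iSup_le fun k => ENNReal.ofReal_le_ofReal (hx k))
  · calc ∫⁻ x, ENNReal.ofReal (G x).toReal ∂μ = ∫⁻ x, G x ∂μ :=
          lintegral_congr_ae (hG_lt_top.mono fun x hx => ENNReal.ofReal_toReal hx.ne)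
      _ ≤ C := hG_le

end EssSup

theorem sum_mul_div_eq_of_sum_eq {ι : Type*} (s : Finset ι) {a U : ℝ} {w : ι → ℝ}
    (hw : ∑ i ∈ s, w i = U) (ha : U = 0 → a = 0) : ∑ i ∈ s, a * w i / U = a := by
  rcases eq_or_ne U 0 with hU | hU
  · simp [hU, ha hU]
  · rw [← Finset.sum_div, ← Finset.mul_sum, hw, mul_div_cancel_right₀ _ hU]

section VariationSum

variable {μ : Measure Ω} {T : (Ω → ℝ) → Ω → ℝ} {u u' f f' : Ω → ℝ}

def IsVariationSum (μ : Measure Ω) (T : (Ω → ℝ) → Ω → ℝ) (u f : Ω → ℝ) : Prop :=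
  ∃ (ι : Type) (_ : Fintype ι) (v : ι → Ω → ℝ), (∀ i, Measurable (v i)) ∧
    (∀ i, 0 ≤ᵐ[μ] v i) ∧ (fun x => ∑ i, v i x) =ᵐ[μ] u ∧ f = fun x => ∑ i, |T (v i) x|

theorem isVariationSum_self (hu : Measurable u) (hu0 : 0 ≤ᵐ[μ] u) :
    IsVariationSum μ T u fun x => |T u x| :=
  ⟨Unit, inferInstance, fun _ => u, fun _ => hu, fun _ => hu0, by simp, by simp⟩

namespace IsVariationSum

theorem measurable (hT : IsDS μ T) (h : IsVariationSum μ T u f) : Measurable f := by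
  obtain ⟨ι, _, v, hv, -, -, rfl⟩ := h
  exact Finset.measurable_sum _ fun i _ => (hT.measurable (hv i)).abs

theorem nonneg (h : IsVariationSum μ T u f) (x : Ω) : 0 ≤ f x := by
  obtain ⟨ι, _, v, -, -, -, rfl⟩ := h
  exact Finset.sum_nonneg fun i _ => abs_nonneg _

theorem congr (h : IsVariationSum μ T u f) (hu : u =ᵐ[μ] u') : IsVariationSum μ T u' f := by
  obtain ⟨ι, _, v, hv, hv0, hvu, rfl⟩ := h
  exact ⟨ι, _, v, hv, hv0, hvu.trans hu, rfl⟩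

theorem sum {κ : Type} [Fintype κ] {w g : κ → Ω → ℝ} (h : ∀ j, IsVariationSum μ T (w j) (g j)) :
    IsVariationSum μ T (fun x => ∑ j, w j x) (fun x => ∑ j, g j x) := by
  choose ι _ v hv hv0 hvw hg using h
  refine ⟨Σ j, ι j, inferInstance, fun i => v i.1 i.2, fun i => hv _ _, fun i => hv0 _ _, ?_, ?_⟩
  · filter_upwards [ae_all_iff.2 hvw] with x hx
    simp only [Fintype.sum_sigma, hx]
  · ext x
    simp only [Fintype.sum_sigma, hg]

theorem add (h : IsVariationSum μ T u f) (h' : IsVariationSum μ T u' f') :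
    IsVariationSum μ T (u + u') (f + f') := by
  have := sum (w := fun b => bif b then u else u') (g := fun b => bif b then f else f')
    (by rintro (_ | _) <;> assumption)
  exact (by simpa [Fintype.sum_bool, add_comm] using this :
    IsVariationSum μ T (fun x => u x + u' x) (fun x => f x + f' x))

theorem abs_le (hT : IsDS μ T) (h : IsVariationSum μ T u f) (hu : Measurable u) :
    ∀ᵐ x ∂μ, |T u x| ≤ f x := by
  obtain ⟨ι, _, v, hv, -, hvu, rfl⟩ := h
  exact hT.ae_abs_le_sum_abs hu hv hvu.symm

theorem lintegral_le (hT : IsDS μ T) (h : IsVariationSum μ T u f)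
    (hu : Integrable u μ) : ∫⁻ x, ENNReal.ofReal (f x) ∂μ ≤ ∫⁻ x, ENNReal.ofReal (u x) ∂μ := by
  obtain ⟨ι, _, v, hv, hv0, hvu, rfl⟩ := h
  have hv0' : ∀ᵐ x ∂μ, ∀ i, 0 ≤ v i x := ae_all_iff.2 hv0
  have hvi : ∀ i, Integrable (v i) μ := fun i => hu.mono' (hv i).aestronglyMeasurable <| by
    filter_upwards [hv0', hvu] with x hx hxu
    rw [Real.norm_of_nonneg (hx i), ← hxu]
    exact Finset.single_le_sum (fun j _ => hx j) (Finset.mem_univ i)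
  calc ∫⁻ x, ENNReal.ofReal (∑ i, |T (v i) x|) ∂μ = ∑ i, ∫⁻ x, ‖T (v i) x‖ₑ ∂μ := by
        simp_rw [ENNReal.ofReal_sum_of_nonneg (fun i _ => abs_nonneg _),
          ← Real.enorm_eq_ofReal_abs]
        exact lintegral_finsetSum _ fun i _ => (hT.measurable (hv i)).enorm
    _ ≤ ∑ i, ∫⁻ x, ‖v i x‖ₑ ∂μ := Finset.sum_le_sum fun i _ => hT.lintegral_enorm_le (hvi i)
    _ = ∫⁻ x, ENNReal.ofReal (u x) ∂μ := by
        rw [← lintegral_finsetSum _ fun i _ => (hv i).enorm]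
        refine lintegral_congr_ae ?_
        filter_upwards [hv0', hvu] with x hx hxu
        rw [← hxu, ENNReal.ofReal_sum_of_nonneg fun i _ => hx i]
        exact Finset.sum_congr rfl fun i _ => Real.enorm_of_nonneg (hx i)

/-- The pieces `vᵢ wⱼ / u` refine both decompositions `u = ∑ vᵢ = ∑ wⱼ`; where `u = 0`, all
pieces vanish a.e., so the junk value of division by zero does no harm. -/
theorem exists_split (hT : IsDS μ T) (h : IsVariationSum μ T u f)
    (hu : Measurable u) {κ : Type} [Fintype κ] {w : κ → Ω → ℝ} (hw : ∀ j, Measurable (w j))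
    (hw0 : ∀ j, 0 ≤ᵐ[μ] w j) (hwu : (fun x => ∑ j, w j x) =ᵐ[μ] u) :
    ∃ g : κ → Ω → ℝ, (∀ j, IsVariationSum μ T (w j) (g j)) ∧
      f ≤ᵐ[μ] fun x => ∑ j, g j x := by
  obtain ⟨ι, _, v, hv, hv0, hvu, rfl⟩ := h
  set r : ι → κ → Ω → ℝ := fun i j x => v i x * w j x / u x
  have hr : ∀ i j, Measurable (r i j) := fun i j => ((hv i).mul (hw j)).div hu
  have hgood : ∀ᵐ x ∂μ, (∀ i, 0 ≤ v i x) ∧ (∀ j, 0 ≤ w j x) ∧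
      ∑ i, v i x = u x ∧ ∑ j, w j x = u x := by
    filter_upwards [ae_all_iff.2 hv0, ae_all_iff.2 hw0, hvu, hwu] with x h1 h2 h3 h4
    exact ⟨h1, h2, h3, h4⟩
  have hzero : ∀ {α : Type} [Fintype α] (a : α → ℝ) (x : Ω), (∀ i, 0 ≤ a i) →
      ∑ i, a i = u x → ∀ i, u x = 0 → a i = 0 := fun a x ha hs i h0 =>
    (Finset.sum_eq_zero_iff_of_nonneg fun i _ => ha i).1 (hs.trans h0) i (Finset.mem_univ i)
  refine ⟨fun j x => ∑ i, |T (r i j) x|, fun j => ⟨ι, inferInstance, fun i => r i j,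
    fun i => hr i j, fun i => ?_, ?_, rfl⟩, ?_⟩
  · filter_upwards [hgood] with x ⟨h1, h2, _, h4⟩
    exact div_nonneg (mul_nonneg (h1 i) (h2 j)) (h4 ▸ Finset.sum_nonneg fun j _ => h2 j)
  · filter_upwards [hgood] with x ⟨h1, h2, h3, h4⟩
    simp only [r, mul_comm (v _ x)]
    exact sum_mul_div_eq_of_sum_eq _ h3 (hzero _ x h2 h4 j)
  · have hsplit : ∀ i, ∀ᵐ x ∂μ, |T (v i) x| ≤ ∑ j, |T (r i j) x| := fun i =>
      hT.ae_abs_le_sum_abs (hv i) (hr i) <| by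
        filter_upwards [hgood] with x ⟨h1, h2, h3, h4⟩
        exact (sum_mul_div_eq_of_sum_eq _ h4 (hzero _ x h1 h3 i)).symm
    filter_upwards [ae_all_iff.2 hsplit] with x hx
    exact (Finset.sum_le_sum fun i _ => hx i).trans_eq Finset.sum_comm

theorem directed (hT : IsDS μ T) (hu : Measurable u)
    (h : IsVariationSum μ T u f) (h' : IsVariationSum μ T u f') :
    ∃ g, IsVariationSum μ T u g ∧ f ≤ᵐ[μ] g ∧ f' ≤ᵐ[μ] g := by
  obtain ⟨κ, _, w, hw, hw0, hwu, rfl⟩ := h'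
  obtain ⟨g, hg, hfg⟩ := h.exists_split hT hu hw hw0 hwu
  refine ⟨_, (sum hg).congr hwu, hfg, ?_⟩
  filter_upwards [ae_all_iff.2 fun j => (hg j).abs_le hT (hw j)] with x hx
  exact Finset.sum_le_sum fun j _ => hx j

/-- The sign trick: `∑ |T vᵢ| = T (∑ ± vᵢ)` pointwise for a suitable choice of signs. -/
theorem le_const (hT : IsDS μ T) (h : IsVariationSum μ T u f) {c : ℝ}
    (hc : 0 ≤ c) (huc : ∀ᵐ x ∂μ, u x ≤ c) : ∀ᵐ x ∂μ, f x ≤ c := by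
  obtain ⟨ι, _, v, hv, hv0, hvu, rfl⟩ := h
  set sgn : (ι → Bool) → ι → ℝ := fun s i => bif s i then 1 else -1
  have hsigned : ∀ s, ∀ᵐ x ∂μ, |∑ i, sgn s i * T (v i) x| ≤ c := by
    intro s
    have hmeas : Measurable fun x => ∑ i, sgn s i * v i x :=
      Finset.measurable_sum _ fun i _ => measurable_const.mul (hv i)
    have hbound : ∀ᵐ x ∂μ, |∑ i, sgn s i * v i x| ≤ c := by
      filter_upwards [ae_all_iff.2 hv0, hvu, huc] with x h1 h2 h3
      refine (Finset.abs_sum_le_sum_abs _ _).trans (le_of_eq_of_le ?_ (h2 ▸ h3))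
      refine Finset.sum_congr rfl fun i _ => ?_
      rw [abs_mul, abs_of_nonneg (h1 i)]
      cases hs : s i <;> simp [sgn, hs]
    filter_upwards [hT.ae_abs_le hmeas hc hbound] with x hx
    have hTs : ∀ i, T (fun x => sgn s i * v i x) = fun x => sgn s i * T (v i) x :=
      fun i => hT.map_smul (sgn s i) (v i)
    simpa only [hT.map_sum, hTs] using hx
  filter_upwards [ae_all_iff.2 hsigned] with x hx
  refine le_trans (le_of_eq ?_) ((le_abs_self _).trans (hx fun i => decide (0 ≤ T (v i) x)))
  refine Finset.sum_congr rfl fun i _ => ?_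
  by_cases h0 : 0 ≤ T (v i) x
  · simp [sgn, h0, abs_of_nonneg h0]
  · simp [sgn, h0, abs_of_neg (not_le.1 h0)]

end IsVariationSum

end VariationSum

section VarSup

variable {μ : Measure Ω} {T : (Ω → ℝ) → Ω → ℝ} {u : Ω → ℝ}

open Classical in
/-- The Chacon–Krengel modulus `|T| u` for `u ≥ 0`. -/
noncomputable def varSup (μ : Measure Ω) (T : (Ω → ℝ) → Ω → ℝ) (u : Ω → ℝ) : Ω → ℝ :=
  if h : ∃ t, Measurable t ∧ IsAELUB μ {f | IsVariationSum μ T u f} t ∧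
      ∫⁻ x, ENNReal.ofReal (t x) ∂μ ≤ ∫⁻ x, ENNReal.ofReal (u x) ∂μ then h.choose else 0

theorem measurable_varSup : Measurable (varSup μ T u) := by
  unfold varSup
  split_ifs with h
  exacts [h.choose_spec.1, measurable_const]

variable (hT : IsDS μ T) (hu : Measurable u) (hui : Integrable u μ) (hu0 : 0 ≤ᵐ[μ] u)
include hT hu hui hu0

theorem varSup_spec : IsAELUB μ {f | IsVariationSum μ T u f} (varSup μ T u) ∧
    ∫⁻ x, ENNReal.ofReal (varSup μ T u x) ∂μ ≤ ∫⁻ x, ENNReal.ofReal (u x) ∂μ := by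
  have h : ∃ t, Measurable t ∧ IsAELUB μ {f | IsVariationSum μ T u f} t ∧
      ∫⁻ x, ENNReal.ofReal (t x) ∂μ ≤ ∫⁻ x, ENNReal.ofReal (u x) ∂μ :=
    exists_isAELUB_of_directed ⟨_, isVariationSum_self hu hu0⟩ (fun f hf => hf.measurable hT)
      (fun f hf => ae_of_all _ hf.nonneg) (fun f hf g hg => hf.directed hT hu hg)
      (hui.lintegral_lt_top.ne) (fun f hf => hf.lintegral_le hT hui)
  rw [varSup, dif_pos h]
  exact h.choose_spec.2

theorem IsVariationSum.le_varSup {f : Ω → ℝ} (hf : IsVariationSum μ T u f) :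
    f ≤ᵐ[μ] varSup μ T u :=
  (varSup_spec hT hu hui hu0).1.1 f hf

theorem varSup_le {z : Ω → ℝ} (hz : ∀ f, IsVariationSum μ T u f → f ≤ᵐ[μ] z) :
    varSup μ T u ≤ᵐ[μ] z :=
  (varSup_spec hT hu hui hu0).1.2 z hz

theorem varSup_nonneg : 0 ≤ᵐ[μ] varSup μ T u := by
  filter_upwards [(isVariationSum_self hu hu0).le_varSup hT hu hui hu0] with x hx
  exact (abs_nonneg _).trans hx

theorem integrable_varSup : Integrable (varSup μ T u) μ := by
  refine ⟨measurable_varSup.aestronglyMeasurable, ?_⟩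
  rw [hasFiniteIntegral_iff_ofReal (varSup_nonneg hT hu hui hu0)]
  exact (varSup_spec hT hu hui hu0).2.trans_lt hui.lintegral_lt_top

theorem varSup_le_const {c : ℝ} (hc : 0 ≤ c) (huc : ∀ᵐ x ∂μ, u x ≤ c) :
    ∀ᵐ x ∂μ, varSup μ T u x ≤ c :=
  varSup_le hT hu hui hu0 (z := fun _ => c) fun _ hf => hf.le_const hT hc huc

theorem ae_abs_le_varSup {v : Ω → ℝ} (hv : Measurable v) (hvu : ∀ᵐ x ∂μ, |v x| ≤ u x) :
    ∀ᵐ x ∂μ, |T v x| ≤ varSup μ T u x := by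
  set p : Ω → ℝ := fun x => max (v x) 0
  set n : Ω → ℝ := fun x => max (-v x) 0
  have hp : Measurable p := hv.max measurable_const
  have hn : Measurable n := hv.neg.max measurable_const
  have hTv : T v = T p - T n := by
    rw [← hT.map_sub]
    exact congrArg T (funext fun x => (max_zero_sub_max_neg_zero_eq_self (v x)).symm)
  have hsum : p + n + (u - fun x => |v x|) = u :=
    funext fun x => by simp [p, n, max_zero_add_max_neg_zero_eq_abs_self]
  have hf := (((isVariationSum_self (T := T) hp (ae_of_all _ fun _ => le_max_right _ _)).add
    (isVariationSum_self hn (ae_of_all _ fun _ => le_max_right _ _))).add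
    (isVariationSum_self (hu.sub hv.abs) (hvu.mono fun x hx => sub_nonneg.2 hx))).congr
    (ae_of_all _ fun x => congrFun hsum x)
  filter_upwards [hf.le_varSup hT hu hui hu0] with x hx
  refine le_trans ?_ hx
  rw [hTv]
  simp only [Pi.add_apply, Pi.sub_apply]
  linarith [abs_sub (T p x) (T n x), abs_nonneg (T (u - fun x => |v x|) x)]

variable {u' : Ω → ℝ} (hu' : Measurable u') (hui' : Integrable u' μ) (hu0' : 0 ≤ᵐ[μ] u')
include hu' hui' hu0'

theorem varSup_congr (h : u =ᵐ[μ] u') : varSup μ T u =ᵐ[μ] varSup μ T u' :=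
  (varSup_le hT hu hui hu0 fun _ hf => (hf.congr h).le_varSup hT hu' hui' hu0').antisymm
    (varSup_le hT hu' hui' hu0' fun _ hf => (hf.congr h.symm).le_varSup hT hu hui hu0)

theorem varSup_add : varSup μ T (u + u') =ᵐ[μ] varSup μ T u + varSup μ T u' := by
  have hs := hu.add hu'
  have hsi := hui.add hui'
  have hs0 : 0 ≤ᵐ[μ] u + u' := by filter_upwards [hu0, hu0'] with x h h'; exact add_nonneg h h'
  refine (varSup_le hT hs hsi hs0 fun f hf => ?_).antisymm ?_
  · obtain ⟨g, hg, hfg⟩ := hf.exists_split hT hs (w := fun b => bif b then u else u')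
      (by rintro (_ | _) <;> assumption) (by rintro (_ | _) <;> assumption)
      (ae_of_all _ fun x => by simp)
    filter_upwards [hfg, (hg true).le_varSup hT hu hui hu0,
      (hg false).le_varSup hT hu' hui' hu0'] with x h1 h2 h3
    simp only [Fintype.sum_bool] at h1
    exact h1.trans (add_le_add h2 h3)
  · -- `varSup` is the least a.e. upper bound, so it suffices to bound the members one at a time.
    have hle : ∀ f', IsVariationSum μ T u' f' →
        varSup μ T u ≤ᵐ[μ] varSup μ T (u + u') - f' := fun f' hf' =>
      varSup_le hT hu hui hu0 fun f hf => by
        filter_upwards [(hf.add hf').le_varSup hT hs hsi hs0] with x hx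
        simp only [Pi.add_apply, Pi.sub_apply] at hx ⊢
        linarith
    have hle' := varSup_le hT hu' hui' hu0' (z := varSup μ T (u + u') - varSup μ T u)
      fun f' hf' => by
        filter_upwards [hle f' hf'] with x hx
        simp only [Pi.sub_apply] at hx ⊢
        linarith
    filter_upwards [hle'] with x hx
    simp only [Pi.add_apply, Pi.sub_apply] at hx ⊢
    linarith

end VarSup

/-- The linear modulus `|T| w = |T| w⁺ - |T| w⁻`. -/
noncomputable def modulus (μ : Measure Ω) (T : (Ω → ℝ) → Ω → ℝ) (w : Ω → ℝ) : Ω → ℝ :=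
  varSup μ T (fun x => max (w x) 0) - varSup μ T (fun x => max (-w x) 0)

section Modulus

variable {μ : Measure Ω} {T : (Ω → ℝ) → Ω → ℝ} (hT : IsDS μ T) {w w' : Ω → ℝ}
include hT

theorem modulus_ae_eq_varSup (hw : Measurable w) (hwi : Integrable w μ) (hw0 : 0 ≤ᵐ[μ] w) :
    modulus μ T w =ᵐ[μ] varSup μ T w := by
  have hn : Measurable fun x => max (-w x) 0 := hw.neg.max measurable_const
  have hn0 : 0 ≤ᵐ[μ] fun x => max (-w x) 0 := ae_of_all _ fun _ => le_max_right _ _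
  have hneg : ∀ᵐ x ∂μ, max (-w x) 0 ≤ 0 := hw0.mono fun x hx => by simpa using hx
  filter_upwards [varSup_congr hT (hw.max measurable_const) hwi.pos_part
      (ae_of_all _ fun _ => le_max_right _ _) hw hwi hw0 (hw0.mono fun x hx => max_eq_left hx),
    varSup_le_const hT hn hwi.neg_part hn0 le_rfl hneg, varSup_nonneg hT hn hwi.neg_part hn0]
    with x h1 h2 h3
  simp only [modulus, Pi.sub_apply, h1]
  linarith [show varSup μ T (fun x => max (-w x) 0) x = 0 from le_antisymm h2 h3]

theorem modulus_add (hw : Measurable w) (hwi : Integrable w μ) (hw' : Measurable w')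
    (hwi' : Integrable w' μ) : modulus μ T (w + w') =ᵐ[μ] modulus μ T w + modulus μ T w' := by
  set pos : (Ω → ℝ) → Ω → ℝ := fun f x => max (f x) 0
  set neg : (Ω → ℝ) → Ω → ℝ := fun f x => max (-f x) 0
  have hpos : ∀ {f}, Measurable f → Integrable f μ →
      Measurable (pos f) ∧ Integrable (pos f) μ ∧ 0 ≤ᵐ[μ] pos f := fun hf hfi =>
    ⟨hf.max measurable_const, hfi.pos_part, ae_of_all _ fun _ => le_max_right _ _⟩
  have hneg : ∀ {f}, Measurable f → Integrable f μ →
      Measurable (neg f) ∧ Integrable (neg f) μ ∧ 0 ≤ᵐ[μ] neg f := fun hf hfi =>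
    ⟨hf.neg.max measurable_const, hfi.neg_part, ae_of_all _ fun _ => le_max_right _ _⟩
  have hadd : ∀ {f g}, (Measurable f ∧ Integrable f μ ∧ 0 ≤ᵐ[μ] f) →
      (Measurable g ∧ Integrable g μ ∧ 0 ≤ᵐ[μ] g) →
      (Measurable (f + g) ∧ Integrable (f + g) μ ∧ 0 ≤ᵐ[μ] f + g) ∧
        varSup μ T (f + g) =ᵐ[μ] varSup μ T f + varSup μ T g :=
    fun ⟨hf, hfi, hf0⟩ ⟨hg, hgi, hg0⟩ => ⟨⟨hf.add hg, hfi.add hgi,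
      by filter_upwards [hf0, hg0] with x h h'; exact add_nonneg h h'⟩,
      varSup_add hT hf hfi hf0 hg hgi hg0⟩
  -- `(w + w')⁺ + w⁻ + w'⁻ = (w + w')⁻ + w⁺ + w'⁺`, and `varSup` is additive on both sides.
  have hid : pos (w + w') + (neg w + neg w') = neg (w + w') + (pos w + pos w') := by
    ext x
    simp only [pos, neg, Pi.add_apply]
    linarith [max_zero_sub_max_neg_zero_eq_self (w x + w' x),
      max_zero_sub_max_neg_zero_eq_self (w x), max_zero_sub_max_neg_zero_eq_self (w' x)]
  have hN := hadd (hneg hw hwi) (hneg hw' hwi')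
  have hP := hadd (hpos hw hwi) (hpos hw' hwi')
  have hL := hadd (hpos (hw.add hw') (hwi.add hwi')) hN.1
  have hR := hadd (hneg (hw.add hw') (hwi.add hwi')) hP.1
  filter_upwards [hN.2, hP.2, hL.2, hR.2] with x h1 h2 h3 h4
  rw [hid] at h3
  simp only [Pi.add_apply] at h1 h2 h3 h4
  change varSup μ T (pos (w + w')) x - varSup μ T (neg (w + w')) x =
    (varSup μ T (pos w) x - varSup μ T (neg w) x) + (varSup μ T (pos w') x - varSup μ T (neg w') x)
  linarith

theorem IsDS.isPositiveDS_modulus : IsPositiveDS μ (modulus μ T) where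
  measurable _ := measurable_varSup.sub measurable_varSup
  integrable hf hfi :=
    (integrable_varSup hT (hf.max measurable_const) hfi.pos_part
      (ae_of_all _ fun _ => le_max_right _ _)).sub
    (integrable_varSup hT (hf.neg.max measurable_const) hfi.neg_part
      (ae_of_all _ fun _ => le_max_right _ _))
  map_add hf hfi hg hgi := modulus_add hT hf hfi hg hgi
  nonneg hf hfi hf0 := by
    filter_upwards [modulus_ae_eq_varSup hT hf hfi hf0, varSup_nonneg hT hf hfi hf0] with x h1 h2
    rw [Pi.zero_apply, h1]
    exact h2
  integral_le {f} hf hfi hf0 := by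
    rw [integral_congr_ae (modulus_ae_eq_varSup hT hf hfi hf0),
      integral_eq_lintegral_of_nonneg_ae (varSup_nonneg hT hf hfi hf0)
        measurable_varSup.aestronglyMeasurable,
      integral_eq_lintegral_of_nonneg_ae hf0 hf.aestronglyMeasurable]
    exact ENNReal.toReal_mono hfi.lintegral_lt_top.ne (varSup_spec hT hf hfi hf0).2
  le_const hf hfi hf0 hc hfc := by
    filter_upwards [modulus_ae_eq_varSup hT hf hfi hf0, varSup_le_const hT hf hfi hf0 hc hfc]
      with x h1 h2
    rwa [h1]

theorem IsDS.ae_abs_iterate_le_modulus {b : Ω → ℝ} (hb : Measurable b) (hbi : Integrable b μ)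
    (k : ℕ) : ∀ᵐ x ∂μ, |T^[k] b x| ≤ (modulus μ T)^[k] (fun x => |b x|) x := by
  have hP := hT.isPositiveDS_modulus
  induction k with
  | zero => exact ae_of_all _ fun x => le_rfl
  | succ k ih =>
    have hu := hP.measurable_iterate hb.abs k
    have hui := hP.integrable_iterate hb.abs hbi.abs k
    have hu0 := hP.iterate_nonneg hb.abs hbi.abs (ae_of_all _ fun x => abs_nonneg (b x)) k
    filter_upwards [ae_abs_le_varSup hT hu hui hu0 (hT.measurable_iterate hb k) ih,
      modulus_ae_eq_varSup hT hu hui hu0] with x h1 h2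
    simp only [Function.iterate_succ_apply']
    rwa [h2]

end Modulus

section MaximalInequality

variable {μ : Measure Ω} {T : (Ω → ℝ) → Ω → ℝ}

theorem lintegral_enorm_indicator_mul_le {p : ℝ≥0∞} (hp1 : 1 ≤ p) (hp : p ≠ ∞) (h : Ω → ℝ)
    {c : ℝ} (hc : 0 < c) :
    (∫⁻ x, ‖{x | c < |h x|}.indicator h x‖ₑ ∂μ) * ENNReal.ofReal c ^ (p.toReal - 1) ≤
      eLpNorm h p μ ^ p.toReal := by
  have hq1 : 1 ≤ p.toReal := ENNReal.toReal_mono hp hp1 |>.trans_eq' ENNReal.toReal_one.symm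
  have hq0 : p.toReal ≠ 0 := by linarith
  calc _ ≤ ∫⁻ x, ‖{x | c < |h x|}.indicator h x‖ₑ * ENNReal.ofReal c ^ (p.toReal - 1) ∂μ :=
        lintegral_mul_const_le _ _
    _ ≤ ∫⁻ x, ‖h x‖ₑ ^ p.toReal ∂μ := lintegral_mono fun x => ?_
    _ = eLpNorm h p μ ^ p.toReal := by
        rw [eLpNorm_eq_lintegral_rpow_enorm_toReal (by positivity) hp, one_div,
          ENNReal.rpow_inv_rpow hq0]
  by_cases hx : c < |h x|
  · have hcx : ENNReal.ofReal c ≤ ‖h x‖ₑ := by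
      rw [Real.enorm_eq_ofReal_abs]; exact ENNReal.ofReal_le_ofReal hx.le
    have hx0 : ‖h x‖ₑ ≠ 0 := by
      rw [Real.enorm_eq_ofReal_abs]; exact (ENNReal.ofReal_pos.2 (hc.trans hx)).ne'
    rw [Set.indicator_of_mem (show x ∈ {x | c < |h x|} from hx)]
    calc ‖h x‖ₑ * ENNReal.ofReal c ^ (p.toReal - 1)
        ≤ ‖h x‖ₑ ^ (1 : ℝ) * ‖h x‖ₑ ^ (p.toReal - 1) := by
          rw [ENNReal.rpow_one]
          gcongr
      _ = ‖h x‖ₑ ^ p.toReal := by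
          rw [← ENNReal.rpow_add _ _ hx0 enorm_ne_top, add_sub_cancel]
  · simp [Set.indicator_of_notMem (show x ∉ {x | c < |h x|} from hx)]

theorem ofReal_integral_abs_indicator_div_le {p : ℝ≥0∞} (hp1 : 1 ≤ p) (hp : p ≠ ∞) {h : Ω → ℝ}
    (hh : Measurable h) {c : ℝ} (hc : 0 < c) :
    ENNReal.ofReal ((∫ x, |{x | c < |h x|}.indicator h x| ∂μ) / c) ≤
      (eLpNorm h p μ / ENNReal.ofReal c) ^ p.toReal := by
  have hle := lintegral_enorm_indicator_mul_le (μ := μ) hp1 hp h hc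
  set C := ENNReal.ofReal c
  set b := {x | c < |h x|}.indicator h
  have hC0 : C ≠ 0 := (ENNReal.ofReal_pos.2 hc).ne'
  have hCq : C ^ p.toReal = C ^ (p.toReal - 1) * C := by
    conv_lhs => rw [show p.toReal = (p.toReal - 1) + 1 by ring]
    rw [ENNReal.rpow_add _ _ hC0 ENNReal.ofReal_ne_top, ENNReal.rpow_one]
  have hb : Measurable b := hh.indicator (measurableSet_lt measurable_const hh.abs)
  calc _ ≤ (∫⁻ x, ‖b x‖ₑ ∂μ) / C := by
        simp_rw [← Real.norm_eq_abs]
        rw [integral_norm_eq_lintegral_enorm hb.aestronglyMeasurable, ENNReal.ofReal_div_of_pos hc]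
        exact ENNReal.div_le_div_right ENNReal.ofReal_toReal_le _
    _ = (∫⁻ x, ‖b x‖ₑ ∂μ) * C ^ (p.toReal - 1) / C ^ p.toReal := by
        rw [hCq, mul_comm _ (C ^ (p.toReal - 1)), ENNReal.mul_div_mul_left _ _
          (ENNReal.rpow_pos (ENNReal.ofReal_pos.2 hc) ENNReal.ofReal_ne_top).ne'
          (ENNReal.rpow_ne_top_of_nonneg' (ENNReal.ofReal_pos.2 hc) ENNReal.ofReal_ne_top)]
    _ ≤ eLpNorm h p μ ^ p.toReal / C ^ p.toReal := ENNReal.div_le_div_right hle _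
    _ = _ := (ENNReal.div_rpow_of_nonneg _ _ ENNReal.toReal_nonneg).symm

variable [SigmaFinite μ] (hT : IsDS μ T)
include hT

theorem IsDS.measure_maximal_cesaro_add_le {g b : Ω → ℝ} (hg : Measurable g) {c : ℝ}
    (hc : 0 < c) (hgc : ∀ᵐ x ∂μ, |g x| ≤ c) (hb : Measurable b) (hbi : Integrable b μ) :
    μ {x | ∃ n : ℕ, 2 * c < |cesaro T (n + 1) (g + b) x|} ≤
      ENNReal.ofReal ((∫ x, |b x| ∂μ) / c) := by
  have hP := hT.isPositiveDS_modulus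
  refine (measure_mono_ae ?_).trans
    (hP.measure_maximal_le hb.abs hbi.abs (ae_of_all _ fun x => abs_nonneg (b x)) hc)
  filter_upwards [ae_all_iff.2 (hT.ae_abs_iterate_le hg hc.le hgc),
    ae_all_iff.2 (hT.ae_abs_iterate_le_modulus hb hbi)] with x hgx hbx ⟨n, hn⟩
  refine ⟨n + 1, ?_⟩
  have hsum : |∑ k ∈ Finset.range (n + 1), T^[k] (g + b) x| ≤
      (n + 1) * c + ∑ k ∈ Finset.range (n + 1), (modulus μ T)^[k] (fun x => |b x|) x := by
    calc _ ≤ ∑ k ∈ Finset.range (n + 1), |T^[k] (g + b) x| := Finset.abs_sum_le_sum_abs _ _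
      _ ≤ ∑ k ∈ Finset.range (n + 1), (c + (modulus μ T)^[k] (fun x => |b x|) x) := by
        refine Finset.sum_le_sum fun k _ => ?_
        rw [hT.iterate_add, Pi.add_apply]
        exact (abs_add_le _ _).trans (add_le_add (hgx k) (hbx k))
      _ = _ := by simp [Finset.sum_add_distrib]
  rw [cesaro, abs_div, Nat.abs_cast, lt_div_iff₀ (by positivity)] at hn
  push_cast at hn ⊢
  linarith

theorem IsDS.measure_maximal_cesaro_le {p : ℝ≥0∞} (hp1 : 1 ≤ p) (hp : p ≠ ∞) {h : Ω → ℝ}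
    (hh : Measurable h) {c : ℝ} (hc : 0 < c) :
    μ {x | ∃ n : ℕ, 2 * c < |cesaro T (n + 1) h x|} ≤
      (eLpNorm h p μ / ENNReal.ofReal c) ^ p.toReal := by
  set b := {x | c < |h x|}.indicator h
  have hb : Measurable b := hh.indicator (measurableSet_lt measurable_const hh.abs)
  have hgc : ∀ x, |(h - b) x| ≤ c := fun x => by
    by_cases hx : c < |h x|
    · simp [b, Set.indicator_of_mem (show x ∈ {x | c < |h x|} from hx), hc.le]
    · simpa [b, Set.indicator_of_notMem (show x ∉ {x | c < |h x|} from hx)] using hx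
  by_cases hfin : eLpNorm h p μ = ∞
  · have hq : 0 < p.toReal := ENNReal.toReal_pos (by positivity) hp
    simp [hfin, ENNReal.top_div_of_ne_top, ENNReal.top_rpow_of_pos hq]
  have hbi : Integrable b μ := by
    refine ⟨hb.aestronglyMeasurable, ENNReal.lt_top_of_mul_ne_top_left ?_
      (ENNReal.rpow_pos (p := p.toReal - 1) (ENNReal.ofReal_pos.2 hc) ENNReal.ofReal_ne_top).ne'⟩
    exact ne_top_of_le_ne_top (ENNReal.rpow_ne_top_of_nonneg ENNReal.toReal_nonneg hfin)
      (lintegral_enorm_indicator_mul_le hp1 hp h hc)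
  calc _ = μ {x | ∃ n : ℕ, 2 * c < |cesaro T (n + 1) (h - b + b) x|} := by rw [sub_add_cancel]
    _ ≤ ENNReal.ofReal ((∫ x, |b x| ∂μ) / c) :=
      hT.measure_maximal_cesaro_add_le (hh.sub hb) hc (ae_of_all _ hgc) hb hbi
    _ ≤ _ := ofReal_integral_abs_indicator_div_le hp1 hp hh hc

end MaximalInequality

section AlmostUniform

variable {μ : Measure Ω} {F : ℕ → Ω → ℝ} {f : Ω → ℝ}

theorem measure_compl_sdiff_le (E A : Set Ω) : μ (E \ A)ᶜ ≤ μ Eᶜ + μ A := by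
  rw [Set.compl_sdiff, Set.union_comm]
  exact measure_union_le (μ := μ) _ _

/-- The essential supremum in `TendstoAU` can be replaced by a supremum after discarding a
null set from `E`. -/
theorem tendstoAU_iff : TendstoAU μ F f ↔ ∀ ε : ℝ, 0 < ε → ∃ E : Set Ω, MeasurableSet E ∧
    μ Eᶜ ≤ ENNReal.ofReal ε ∧ TendstoUniformlyOn F f atTop E := by
  refine ⟨fun h ε hε => ?_, fun h ε hε => ?_⟩
  · obtain ⟨E, hE, hEμ, hlim⟩ := h ε hε
    set η : ℕ → ℝ≥0∞ := fun n => eLpNorm (E.indicator (f - F n)) ⊤ μ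
    set N := {x | ¬ ∀ n, ‖E.indicator (f - F n) x‖ₑ ≤ η n}
    have hN : μ N = 0 := ae_iff.1 <| ae_all_iff.2 fun n => by
      simpa [η, eLpNorm_exponent_top] using enorm_ae_le_eLpNormEssSup (E.indicator (f - F n)) μ
    refine ⟨E \ toMeasurable μ N, hE.diff (measurableSet_toMeasurable μ N), ?_, ?_⟩
    · calc μ (E \ toMeasurable μ N)ᶜ ≤ μ Eᶜ + μ (toMeasurable μ N) := measure_compl_sdiff_le _ _
        _ ≤ ENNReal.ofReal ε := by rw [measure_toMeasurable, hN, add_zero]; exact hEμ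
    · refine Metric.tendstoUniformlyOn_iff.2 fun δ hδ => ?_
      filter_upwards [(tendsto_order.1 hlim).2 _ (ENNReal.ofReal_pos.2 hδ)] with n hn x hx
      have hxN : ∀ n, ‖E.indicator (f - F n) x‖ₑ ≤ η n := by
        by_contra h'
        exact hx.2 (subset_toMeasurable μ N h')
      have := (hxN n).trans_lt hn
      rwa [Set.indicator_of_mem hx.1, Real.enorm_eq_ofReal_abs,
        ENNReal.ofReal_lt_ofReal_iff hδ, Pi.sub_apply, ← Real.dist_eq] at this
  · obtain ⟨E, hE, hEμ, hunif⟩ := h ε hε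
    refine ⟨E, hE, hEμ, ENNReal.tendsto_nhds_zero.2 fun η hη => ?_⟩
    obtain ⟨δ, -, hδ, hδη⟩ := ENNReal.lt_iff_exists_real_btwn.1 hη
    filter_upwards [Metric.tendstoUniformlyOn_iff.1 hunif δ (ENNReal.ofReal_pos.1 hδ)] with n hn
    rw [eLpNorm_exponent_top]
    refine (eLpNormEssSup_le_of_ae_bound (ae_of_all _ fun x => ?_)).trans hδη.le
    by_cases hx : x ∈ E
    · rw [Set.indicator_of_mem hx, Pi.sub_apply, ← dist_eq_norm]; exact (hn x hx).le
    · rw [Set.indicator_of_notMem hx, norm_zero]; exact (ENNReal.ofReal_pos.1 hδ).le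

theorem tendstoAU_limUnder_of_uniformCauchySeqOn (h : ∀ ε : ℝ, 0 < ε → ∃ E : Set Ω,
    MeasurableSet E ∧ μ Eᶜ ≤ ENNReal.ofReal ε ∧ UniformCauchySeqOn F atTop E) :
    TendstoAU μ F fun x => limUnder atTop fun n => F n x := by
  refine tendstoAU_iff.2 fun ε hε => ?_
  obtain ⟨E, hE, hEμ, hF⟩ := h ε hε
  exact ⟨E, hE, hEμ,
    hF.tendstoUniformlyOn_of_tendsto fun x hx => (hF.cauchySeq hx).tendsto_limUnder⟩

theorem forall_uniformCauchySeqOn_of_approx (h : ∀ ε : ℝ, 0 < ε → ∀ δ : ℝ, 0 < δ →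
    ∃ E : Set Ω, MeasurableSet E ∧ μ Eᶜ ≤ ENNReal.ofReal ε ∧ ∃ G : ℕ → Ω → ℝ,
      UniformCauchySeqOn G atTop E ∧ ∀ n, ∀ x ∈ E, |F n x - G n x| ≤ δ)
    (ε : ℝ) (hε : 0 < ε) : ∃ E : Set Ω, MeasurableSet E ∧ μ Eᶜ ≤ ENNReal.ofReal ε ∧
      UniformCauchySeqOn F atTop E := by
  obtain ⟨ε', hε'0, hε'⟩ := ENNReal.exists_pos_sum_of_countable (ENNReal.ofReal_pos.2 hε).ne' ℕ
  choose E hE hEμ G hG hFG using fun i : ℕ =>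
    h (ε' i) (hε'0 i) (1 / (i + 1)) (by positivity)
  refine ⟨⋂ i, E i, MeasurableSet.iInter hE, ?_, ?_⟩
  · rw [Set.compl_iInter]
    refine (measure_iUnion_le _).trans (le_trans ?_ hε'.le)
    exact ENNReal.tsum_le_tsum fun i => (hEμ i).trans_eq ENNReal.ofReal_coe_nnreal
  · refine Metric.uniformCauchySeqOn_iff.2 fun θ hθ => ?_
    obtain ⟨i, hi⟩ := exists_nat_one_div_lt (show 0 < θ / 3 by positivity)
    obtain ⟨N, hN⟩ := Metric.uniformCauchySeqOn_iff.1 (hG i) (θ / 3) (by positivity)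
    refine ⟨N, fun m hm n hn x hx => ?_⟩
    have hxi := Set.mem_iInter.1 hx i
    have h1 := hFG i m x hxi
    have h2 := hFG i n x hxi
    have h3 := hN m hm n hn x hxi
    rw [Real.dist_eq] at h3 ⊢
    calc |F m x - F n x| ≤ |F m x - G i m x| + |G i m x - G i n x| + |G i n x - F n x| := by
          have := abs_add_three (F m x - G i m x) (G i m x - G i n x) (G i n x - F n x)
          ring_nf at this ⊢
          exact this
      _ < θ := by rw [abs_sub_comm (G i n x)]; linarith

end AlmostUniform

theorem Lp.exists_rpow_eLpNorm_sub_div_lt {μ : Measure Ω} {p : ℝ≥0∞} [Fact (1 ≤ p)]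
    (hp : p ≠ ∞) {fs : ℕ → Lp ℝ p μ} {f : Lp ℝ p μ} (hlim : Tendsto fs atTop (𝓝 f))
    {c η : ℝ≥0∞} (hc : c ≠ 0) (hη : 0 < η) :
    ∃ j, (eLpNorm (⇑f - ⇑(fs j)) p μ / c) ^ p.toReal < η := by
  have hq : 0 < p.toReal :=
    ENNReal.toReal_pos (zero_lt_one.trans_le Fact.out).ne' hp
  have h0 := tendsto_iff_edist_tendsto_0.1 hlim
  simp_rw [edist_comm, Lp.edist_def] at h0
  have h := (ENNReal.continuous_rpow_const (y := p.toReal)).tendsto _ |>.comp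
    (ENNReal.Tendsto.div_const h0 (Or.inr hc))
  rw [ENNReal.zero_div, ENNReal.zero_rpow_of_pos hq] at h
  exact ((tendsto_order.1 h).2 η hη).exists

theorem IsDS.exists_uniformCauchySeqOn_approx_cesaro {μ : Measure Ω} [SigmaFinite μ]
    {T : (Ω → ℝ) → Ω → ℝ} (hT : IsDS μ T) {p : ℝ≥0∞} (hp1 : 1 ≤ p) (hp : p ≠ ∞)
    {f g g' : Ω → ℝ} (hf : Measurable f) (hg : Measurable g)
    (hgAU : TendstoAU μ (fun n => cesaro T (n + 1) g) g') {ε δ : ℝ} (hε : 0 < ε) (hδ : 0 < δ)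
    (hfg : (eLpNorm (f - g) p μ / ENNReal.ofReal (δ / 2)) ^ p.toReal < ENNReal.ofReal (ε / 2)) :
    ∃ E : Set Ω, MeasurableSet E ∧ μ Eᶜ ≤ ENNReal.ofReal ε ∧ ∃ G : ℕ → Ω → ℝ,
      UniformCauchySeqOn G atTop E ∧ ∀ n, ∀ x ∈ E, |cesaro T (n + 1) f x - G n x| ≤ δ := by
  obtain ⟨E, hE, hEμ, hunif⟩ := tendstoAU_iff.1 hgAU (ε / 2) (half_pos hε)
  set B := {x | ∃ n : ℕ, δ < |cesaro T (n + 1) (f - g) x|}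
  have hB : μ B ≤ ENNReal.ofReal (ε / 2) := by
    have h := hT.measure_maximal_cesaro_le (μ := μ) hp1 hp (hf.sub hg) (half_pos hδ)
    rw [mul_div_cancel₀ δ two_ne_zero] at h
    exact h.trans hfg.le
  refine ⟨E \ toMeasurable μ B, hE.diff (measurableSet_toMeasurable μ B), ?_, _,
    hunif.uniformCauchySeqOn.mono Set.sdiff_subset, fun n x hx => ?_⟩
  · calc _ ≤ μ Eᶜ + μ (toMeasurable μ B) := measure_compl_sdiff_le _ _
      _ ≤ ENNReal.ofReal (ε / 2) + ENNReal.ofReal (ε / 2) := by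
        rw [measure_toMeasurable]; exact add_le_add hEμ hB
      _ = ENNReal.ofReal ε := by
        rw [← ENNReal.ofReal_add (by positivity) (by positivity), add_halves]
  · have hxB : ∀ n, |cesaro T (n + 1) (f - g) x| ≤ δ := fun n =>
      not_lt.1 fun h => hx.2 (subset_toMeasurable μ B ⟨n, h⟩)
    simpa [hT.cesaro_sub] using hxB n

/-- for a Dunford-Schwartz operator `T` and `1 ≤ p < ∞`, the set
`C_p = {f ∈ L^p : (M_n(T)(f)) converges a.u.}` is closed in `L^p`. -/
theorem stmt7 (μ : Measure Ω) [SigmaFinite μ] (T : (Ω → ℝ) → Ω → ℝ)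
    (hT : IsDS μ T) (p : ℝ≥0∞) [Fact (1 ≤ p)] (hp : p ≠ ⊤) :
    IsClosed {f : Lp ℝ p μ | ∃ g : Ω → ℝ,
      TendstoAU μ (fun n => cesaro T (n + 1) ⇑f) g} := by
  refine IsSeqClosed.isClosed fun fs f hfs hlim => ⟨_, tendstoAU_limUnder_of_uniformCauchySeqOn <|
    forall_uniformCauchySeqOn_of_approx fun ε hε δ hδ => ?_⟩
  choose g hg using hfs
  obtain ⟨j, hj⟩ := Lp.exists_rpow_eLpNorm_sub_div_lt hp hlim
    (ENNReal.ofReal_pos.2 (half_pos hδ)).ne' (ENNReal.ofReal_pos.2 (half_pos hε))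
  exact hT.exists_uniformCauchySeqOn_approx_cesaro Fact.out hp (Lp.stronglyMeasurable f).measurable
    (Lp.stronglyMeasurable (fs j)).measurable (hg j) hε hδ hj
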